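/- Let u > arccosh(3/2) and φ(u) = arccosh(cosh u − 1/2). Define L_p(u) := Li₂(e^{−u−φ(u)}) − Li₂(e^{−u+φ(u)}) + u·φ(u) + 4pπ² for an integer p ≥ 1. Then the derivative of L_p with respect to u equals log(2cosh(u + φ(u)) − 2), which is positive. -/

import Mathlib

/-!
Differentiating term by term, `Li₂' (x) = -log (1 - x) / x`, so with `a = e^{-u-φ}`, `b = e^{-u+φ}`
the derivative of `L_p` is `log (1 - a) - log (1 - b) + φ + φ' · (u + log (1 - a) + log (1 - b))`.
The defining relation `cosh φ = cosh u - 1/2` is exactly `(1 - a)(1 - b) = e^{-u}`, which kills the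
`φ'` term and turns the rest into `u + φ + 2 log (1 - a) = log (2 cosh (u + φ) - 2)`.
-/

noncomputable def arcosh (x : ℝ) : ℝ := Real.log (x + Real.sqrt (x ^ 2 - 1))

noncomputable def kappa : ℝ := arcosh (3 / 2)

noncomputable def phi (u : ℝ) : ℝ := arcosh (Real.cosh u - 1 / 2)

noncomputable def Li2 (x : ℝ) : ℝ := ∑' n : ℕ, x ^ (n + 1) / ((n : ℝ) + 1) ^ 2

lemma hasDerivAt_Li2_tsum {x : ℝ} (hx : |x| < 1) :
    HasDerivAt Li2 (∑' n : ℕ, x ^ n / ((n : ℝ) + 1)) x := by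
  set r : ℝ := (1 + |x|) / 2 with hr
  have hxr : |x| < r := by linarith
  have hr0 : 0 < r := by linarith [abs_nonneg x]
  refine hasDerivAt_tsum_of_isPreconnected
    (g := fun (n : ℕ) (y : ℝ) => y ^ (n + 1) / ((n : ℝ) + 1) ^ 2)
    (g' := fun (n : ℕ) (y : ℝ) => y ^ n / ((n : ℝ) + 1)) (t := Metric.ball 0 r)
    (summable_geometric_of_lt_one hr0.le (by linarith)) Metric.isOpen_ball
    (convex_ball 0 r).isPreconnected (fun n y _ => ?_) (fun n y hy => ?_)
    (Metric.mem_ball_self hr0) (by simp) (by rwa [mem_ball_zero_iff, Real.norm_eq_abs])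
  · have hn : ((n : ℝ) + 1) ≠ 0 := by positivity
    refine ((hasDerivAt_pow (n + 1) y).div_const (((n : ℝ) + 1) ^ 2)).congr_deriv ?_
    push_cast [Nat.add_sub_cancel]
    rw [pow_two, mul_div_mul_left _ _ hn]
  · rw [mem_ball_zero_iff, Real.norm_eq_abs] at hy
    calc ‖y ^ n / ((n : ℝ) + 1)‖ ≤ |y| ^ n := by
          rw [norm_div, norm_pow, Real.norm_eq_abs, Real.norm_of_nonneg (by positivity)]
          exact div_le_self (by positivity) (by simp)
      _ ≤ r ^ n := pow_le_pow_left₀ (abs_nonneg y) hy.le n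

lemma hasSum_pow_div_succ {x : ℝ} (hx : |x| < 1) (hx0 : x ≠ 0) :
    HasSum (fun n : ℕ => x ^ n / ((n : ℝ) + 1)) (-Real.log (1 - x) / x) := by
  refine ((Real.hasSum_pow_div_log_of_abs_lt_one hx).div_const x).congr_fun fun n => ?_
  rw [pow_succ', mul_div_assoc, mul_div_cancel_left₀ _ hx0]

lemma hasDerivAt_Li2 {x : ℝ} (hx : |x| < 1) (hx0 : x ≠ 0) :
    HasDerivAt Li2 (-Real.log (1 - x) / x) x :=
  (hasSum_pow_div_succ hx hx0).tsum_eq ▸ hasDerivAt_Li2_tsum hx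

lemma hasDerivAt_Li2_exp_sub_Li2_exp_add_mul {v : ℝ → ℝ} {v' u : ℝ} (hv : HasDerivAt v v' u)
    (hvu : |v u| < u) :
    HasDerivAt (fun u => Li2 (Real.exp (-u - v u)) - Li2 (Real.exp (-u + v u)) + u * v u)
      (Real.log (1 - Real.exp (-u - v u)) - Real.log (1 - Real.exp (-u + v u)) + v u +
        v' * (u + Real.log (1 - Real.exp (-u - v u)) + Real.log (1 - Real.exp (-u + v u))))
      u := by
  obtain ⟨hlo, hhi⟩ := abs_lt.1 hvu
  have hexp_abs {t : ℝ} (ht : t < 0) : |Real.exp t| < 1 := by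
    rwa [abs_of_pos (Real.exp_pos t), Real.exp_lt_one_iff]
  have hA := (hasDerivAt_Li2 (x := Real.exp (-u - v u)) (hexp_abs (by linarith))
    (Real.exp_ne_zero _)).comp u ((hasDerivAt_neg' u).sub hv).exp
  have hB := (hasDerivAt_Li2 (x := Real.exp (-u + v u)) (hexp_abs (by linarith))
    (Real.exp_ne_zero _)).comp u ((hasDerivAt_neg' u).add hv).exp
  simp only [Pi.sub_apply, Pi.add_apply] at hA hB
  refine ((hA.sub hB).add ((hasDerivAt_id' u).mul hv)).congr_deriv ?_
  field_simp
  ring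

section Phi

-- `arcosh` unfolds to Mathlib's `Real.arcosh`, whose API is used throughout.
variable {u : ℝ}

lemma kappa_pos : 0 < kappa := Real.arcosh_pos (by norm_num)

lemma cosh_kappa : Real.cosh kappa = 3 / 2 := Real.cosh_arcosh (by norm_num)

lemma three_halves_lt_cosh (hu : kappa < u) : 3 / 2 < Real.cosh u := by
  rwa [← cosh_kappa, Real.cosh_lt_cosh, abs_of_pos kappa_pos, abs_of_pos (kappa_pos.trans hu)]

lemma one_lt_cosh_sub_half (hu : kappa < u) : 1 < Real.cosh u - 1 / 2 := by
  linarith [three_halves_lt_cosh hu]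

lemma phi_pos (hu : kappa < u) : 0 < phi u :=
  Real.arcosh_pos (one_lt_cosh_sub_half hu)

lemma cosh_phi (hu : kappa < u) : Real.cosh (phi u) = Real.cosh u - 1 / 2 :=
  Real.cosh_arcosh (one_lt_cosh_sub_half hu).le

lemma abs_phi_lt (hu : kappa < u) : |phi u| < u := by
  have h : Real.cosh (phi u) < Real.cosh u := by rw [cosh_phi hu]; linarith
  rwa [Real.cosh_lt_cosh, abs_of_pos (kappa_pos.trans hu)] at h

lemma differentiableAt_phi (hu : kappa < u) : DifferentiableAt ℝ phi u :=
  (Real.differentiableAt_arcosh (one_lt_cosh_sub_half hu)).comp u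
    ((Real.differentiable_cosh u).sub_const _)

end Phi

lemma one_sub_exp_mul_one_sub_exp {u v : ℝ} (h : Real.cosh v = Real.cosh u - 1 / 2) :
    (1 - Real.exp (-u - v)) * (1 - Real.exp (-u + v)) = Real.exp (-u) := by
  rw [Real.cosh_eq, Real.cosh_eq] at h
  have hu : Real.exp u * Real.exp (-u) = 1 := by rw [← Real.exp_add]; simp
  have hv : Real.exp v * Real.exp (-v) = 1 := by rw [← Real.exp_add]; simp
  simp only [sub_eq_add_neg, Real.exp_add]
  linear_combination (-2 * Real.exp (-u)) * h + Real.exp (-u) ^ 2 * hv - hu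

lemma log_one_sub_exp_add_log_one_sub_exp {u v : ℝ} (h : Real.cosh v = Real.cosh u - 1 / 2)
    (hvu : |v| < u) :
    Real.log (1 - Real.exp (-u - v)) + Real.log (1 - Real.exp (-u + v)) = -u := by
  obtain ⟨hlo, hhi⟩ := abs_lt.1 hvu
  have hpos {t : ℝ} (ht : t < 0) : 1 - Real.exp t ≠ 0 :=
    (sub_pos.2 (Real.exp_lt_one_iff.2 ht)).ne'
  rw [← Real.log_mul (hpos (by linarith)) (hpos (by linarith)), one_sub_exp_mul_one_sub_exp h,
    Real.log_exp]

lemma log_two_mul_cosh_sub_two {t : ℝ} (ht : t ≠ 0) :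
    Real.log (2 * Real.cosh t - 2) = t + 2 * Real.log (1 - Real.exp (-t)) := by
  have hsq : 2 * Real.cosh t - 2 = Real.exp t * (1 - Real.exp (-t)) ^ 2 := by
    have h : Real.exp t * Real.exp (-t) = 1 := by rw [← Real.exp_add]; simp
    rw [Real.cosh_eq]
    linear_combination (2 - Real.exp (-t)) * h
  have hne : 1 - Real.exp (-t) ≠ 0 := by
    rw [sub_ne_zero, ne_comm, Ne, Real.exp_eq_one_iff]
    exact neg_ne_zero.2 ht
  rw [hsq, Real.log_mul (Real.exp_ne_zero t) (pow_ne_zero 2 hne), Real.log_exp, Real.log_pow]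
  push_cast
  ring

theorem Lp_hasDerivAt_general (p : ℕ) (u : ℝ) (hu : kappa < u) :
    HasDerivAt
      (fun u => Li2 (Real.exp (-u - phi u)) - Li2 (Real.exp (-u + phi u))
        + u * phi u + 4 * p * Real.pi ^ 2)
      (Real.log (2 * Real.cosh (u + phi u) - 2)) u ∧
    0 < Real.log (2 * Real.cosh (u + phi u) - 2) := by
  have hφ := phi_pos hu
  have hlog_sum := log_one_sub_exp_add_log_one_sub_exp (cosh_phi hu) (abs_phi_lt hu)
  have hcosh : 3 / 2 < Real.cosh (u + phi u) := three_halves_lt_cosh (by linarith)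
  refine ⟨?_, Real.log_pos (by linarith)⟩
  refine ((hasDerivAt_Li2_exp_sub_Li2_exp_add_mul (differentiableAt_phi hu).hasDerivAt
    (abs_phi_lt hu)).add_const (4 * p * Real.pi ^ 2)).congr_deriv ?_
  rw [log_two_mul_cosh_sub_two (by linarith [kappa_pos]), neg_add']
  linear_combination (deriv phi u - 1) * hlog_sum

theorem Lp_hasDerivAt (p : ℕ) (hp : 1 ≤ p) (u : ℝ) (hu : kappa < u) :
    HasDerivAt
      (fun u => Li2 (Real.exp (-u - phi u)) - Li2 (Real.exp (-u + phi u))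
        + u * phi u + 4 * p * Real.pi ^ 2)
      (Real.log (2 * Real.cosh (u + phi u) - 2)) u ∧
    0 < Real.log (2 * Real.cosh (u + phi u) - 2) :=
  Lp_hasDerivAt_general p u hu
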